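/- In the linear regression setup, the expected 2-Wasserstein distance between the empirical distribution F_n of the true residuals and the centered empirical distribution F̂_n of the estimated residuals satisfies E[d₂(F_n, F̂_n)] ≤ E[(1/√n) ‖((1/n) 𝟙𝟙ᵀ + Π)^{1/2} ε_n‖₂] ≤ σ √((p+1)/n), where Π = X_n(X_nᵀX_n)⁻¹X_nᵀ. -/

import Mathlib

open MeasureTheory Matrix
open scoped ENNReal NNReal BigOperators

noncomputable section

/-- Euclidean norm on `Fin d → ℝ`. -/
def euclNorm {d : ℕ} (v : Fin d → ℝ) : ℝ := Real.sqrt (∑ i, v i ^ 2)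

/-- `q`-Wasserstein distance between measures on `Fin d → ℝ` (Euclidean norm cost). -/
def wassE (q : ℝ) {d : ℕ} (μ ν : Measure (Fin d → ℝ)) : ℝ :=
  sInf { r : ℝ | ∃ γ : Measure ((Fin d → ℝ) × (Fin d → ℝ)),
    γ.map Prod.fst = μ ∧ γ.map Prod.snd = ν ∧
    r = (∫ z, euclNorm (z.1 - z.2) ^ q ∂γ) ^ (1 / q) }

/-- `q`-Wasserstein distance between measures on `ℝ`. -/
def wassR (q : ℝ) (μ ν : Measure ℝ) : ℝ :=
  sInf { r : ℝ | ∃ γ : Measure (ℝ × ℝ),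
    γ.map Prod.fst = μ ∧ γ.map Prod.snd = ν ∧
    r = (∫ z, |z.1 - z.2| ^ q ∂γ) ^ (1 / q) }

/-- Empirical measure of `k` points. -/
def empMeasure {E : Type*} [MeasurableSpace E] {k : ℕ} (pts : Fin k → E) : Measure E :=
  (k : ℝ≥0∞)⁻¹ • ∑ i, Measure.dirac (pts i)

instance empMeasure.instIsFiniteMeasure {E : Type*} [MeasurableSpace E] {k : ℕ}
    (pts : Fin k → E) : IsFiniteMeasure (empMeasure pts) := by
  constructor
  have h : (∑ i, Measure.dirac (pts i)) Set.univ = (k : ℝ≥0∞) := by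
    simp [Measure.finset_sum_apply]
  rw [empMeasure, Measure.smul_apply, h, smul_eq_mul]
  by_cases hk : k = 0
  · subst hk; simp
  · rw [ENNReal.inv_mul_cancel (by exact_mod_cast hk) (ENNReal.natCast_ne_top k)]
    exact ENNReal.one_lt_top

/-- Spectral norm (operator norm w.r.t. Euclidean norms). -/
def specNorm {m n : ℕ} (A : Matrix (Fin m) (Fin n) ℝ) : ℝ :=
  ‖LinearMap.toContinuousLinearMap (Matrix.toEuclideanLin A)‖

/-- Orlicz (quasi-)norm of order `α` of the identity under a distribution `F` on `ℝ`. -/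
def orlicz (α : ℝ) (F : Measure ℝ) : ℝ :=
  sInf { t : ℝ | 0 < t ∧ ∫ x, Real.exp ((|x| / t) ^ α) ∂F ≤ 2 }

/-- The OLS map `(XᵀX)⁻¹Xᵀ`. -/
def olsM {n p : ℕ} (X : Matrix (Fin n) (Fin p) ℝ) : Matrix (Fin p) (Fin n) ℝ :=
  (Xᵀ * X)⁻¹ * Xᵀ

/-- Center a vector by subtracting the mean of its entries. -/
def center {n : ℕ} (v : Fin n → ℝ) : Fin n → ℝ := fun i => v i - (∑ j, v j) / n

/-- Projection onto the column space of `X`. -/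
def projMat {n p : ℕ} (X : Matrix (Fin n) (Fin p) ℝ) : Matrix (Fin n) (Fin n) ℝ :=
  X * (Xᵀ * X)⁻¹ * Xᵀ

/-- The matrix `(1/n)𝟙𝟙ᵀ + Π`. -/
def covMat {n p : ℕ} (X : Matrix (Fin n) (Fin p) ℝ) : Matrix (Fin n) (Fin n) ℝ :=
  (n : ℝ)⁻¹ • Matrix.of (fun _ _ => (1 : ℝ)) + projMat X

/-- Uniform distribution on `Fin n`. -/
def unifFin (n : ℕ) : Measure (Fin n) := empMeasure (fun i : Fin n => i)

/-- The positive semidefinite square root (Mathlib's removed `Matrix.PosSemidef.sqrt`, old definition). -/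
def Matrix.PosSemidef.sqrt {n : ℕ} {A : Matrix (Fin n) (Fin n) ℝ} (hA : A.PosSemidef) :
    Matrix (Fin n) (Fin n) ℝ :=
  (hA.1.eigenvectorUnitary : Matrix (Fin n) (Fin n) ℝ) *
    Matrix.diagonal (fun i => Real.sqrt (hA.1.eigenvalues i)) *
    (star hA.1.eigenvectorUnitary : Matrix (Fin n) (Fin n) ℝ)

/-! Couple the two empirical measures index by index: the `i`-th true residual with the `i`-th
centred estimated one. This bounds `d₂(Fₙ, F̂ₙ)` by `n^{-1/2} ‖ε - center (ε - Πε)‖`, and since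
centring only shifts by a constant vector, the squared norm is at most
`(𝟙ᵀε)²/n + ‖Πε‖² = εᵀ ((1/n) 𝟙𝟙ᵀ + Π) ε = ‖Sε‖²`, with `S` the square root of that matrix.
For the second inequality, Jensen gives `E‖Sε‖ ≤ (E εᵀ S² ε)^{1/2}`; for i.i.d. centred
coordinates `E εᵀ C ε = σ² tr C`, and `tr ((1/n) 𝟙𝟙ᵀ + Π) = 1 + p`. -/

lemma euclNorm_eq_sqrt_dotProduct {d : ℕ} (v : Fin d → ℝ) : euclNorm v = √(v ⬝ᵥ v) := by
  simp [euclNorm, dotProduct, sq]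

lemma euclNorm_sq {d : ℕ} (v : Fin d → ℝ) : euclNorm v ^ 2 = v ⬝ᵥ v := by
  rw [euclNorm, Real.sq_sqrt (by positivity)]
  simp [dotProduct, sq]

lemma continuous_euclNorm {d : ℕ} : Continuous (euclNorm : (Fin d → ℝ) → ℝ) := by
  unfold euclNorm; fun_prop

namespace Matrix.PosSemidef

variable {n : ℕ} {A : Matrix (Fin n) (Fin n) ℝ} (hA : A.PosSemidef)

lemma transpose_sqrt : hA.sqrtᵀ = hA.sqrt := by
  simp [Matrix.PosSemidef.sqrt, Matrix.mul_assoc, Matrix.star_eq_conjTranspose]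

lemma sqrt_mul_self : hA.sqrt * hA.sqrt = A := by
  set U : Matrix (Fin n) (Fin n) ℝ := (hA.1.eigenvectorUnitary : Matrix (Fin n) (Fin n) ℝ)
  set D := diagonal fun i => Real.sqrt (hA.1.eigenvalues i)
  have hU : star U * U = 1 := Unitary.coe_star_mul_self _
  calc U * D * star U * (U * D * star U) = U * (D * (star U * U) * D) * star U := by
        simp only [Matrix.mul_assoc]
    _ = A := by
      rw [hU, Matrix.mul_one, diagonal_mul_diagonal]
      conv_rhs => rw [hA.1.spectral_theorem, Unitary.conjStarAlgAut_apply]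
      congr 2
      exact congrArg _ (funext fun i => Real.mul_self_sqrt (hA.eigenvalues_nonneg i))

lemma sqrt_mulVec_dotProduct_self (v : Fin n → ℝ) :
    hA.sqrt *ᵥ v ⬝ᵥ hA.sqrt *ᵥ v = v ⬝ᵥ A *ᵥ v := by
  rw [dotProduct_comm, dotProduct_mulVec, ← mulVec_transpose, hA.transpose_sqrt, mulVec_mulVec,
    hA.sqrt_mul_self, dotProduct_comm]

lemma euclNorm_sqrt_mulVec_sq (v : Fin n → ℝ) : euclNorm (hA.sqrt *ᵥ v) ^ 2 = v ⬝ᵥ A *ᵥ v := by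
  rw [euclNorm_sq, hA.sqrt_mulVec_dotProduct_self]

end Matrix.PosSemidef

section Empirical

variable {E : Type*} [MeasurableSpace E] {k : ℕ}

lemma map_empMeasure {E' : Type*} [MeasurableSpace E'] (pts : Fin k → E) {f : E → E'}
    (hf : Measurable f) : (empMeasure pts).map f = empMeasure fun i => f (pts i) := by
  rw [empMeasure, empMeasure, ← Measure.mapₗ_apply_of_measurable hf, LinearMap.map_smul, map_sum]
  simp only [Measure.mapₗ_apply_of_measurable hf, Measure.map_dirac' hf]

lemma integral_empMeasure [MeasurableSingletonClass E] (pts : Fin k → E) (f : E → ℝ) :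
    ∫ x, f x ∂(empMeasure pts) = (k : ℝ)⁻¹ * ∑ i, f (pts i) := by
  rw [empMeasure, integral_smul_measure, integral_finsetSum_measure fun i _ =>
    (integrable_const (f (pts i))).congr (ae_eq_dirac f).symm]
  simp [ENNReal.toReal_inv]

end Empirical

lemma wassR_nonneg (q : ℝ) (μ ν : Measure ℝ) : 0 ≤ wassR q μ ν :=
  Real.sInf_nonneg <| by rintro r ⟨γ, -, -, rfl⟩; positivity

lemma wassR_le_of_coupling {q : ℝ} {μ ν : Measure ℝ} {γ : Measure (ℝ × ℝ)}
    (hfst : γ.map Prod.fst = μ) (hsnd : γ.map Prod.snd = ν) :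
    wassR q μ ν ≤ (∫ z, |z.1 - z.2| ^ q ∂γ) ^ (1 / q) :=
  csInf_le ⟨0, by rintro r ⟨γ, -, -, rfl⟩; positivity⟩ ⟨γ, hfst, hsnd, rfl⟩

lemma wassR_two_empMeasure_le {k : ℕ} (a b : Fin k → ℝ) :
    wassR 2 (empMeasure a) (empMeasure b) ≤ (√k)⁻¹ * euclNorm (a - b) := by
  have hle := wassR_le_of_coupling (q := 2) (γ := empMeasure fun i => (a i, b i))
    (map_empMeasure _ measurable_fst) (map_empMeasure _ measurable_snd)
  convert hle using 1
  rw [integral_empMeasure, ← Real.sqrt_eq_rpow, Real.sqrt_mul (by positivity), Real.sqrt_inv]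
  simp [euclNorm, sq_abs]

section LeastSquares

variable {n p : ℕ} {X : Matrix (Fin n) (Fin p) ℝ}

lemma isUnit_det_transpose_mul_self (hX : X.rank = p) : IsUnit (Xᵀ * X).det := by
  refine (isUnit_iff_isUnit_det _).mp (mulVec_surjective_iff_isUnit.mp ?_)
  have hrange : LinearMap.range (Xᵀ * X).mulVecLin = ⊤ := by
    apply Submodule.eq_top_of_finrank_eq
    rw [← Matrix.rank, rank_transpose_mul_self, hX, Module.finrank_fin_fun]
  exact LinearMap.range_eq_top.mp hrange

lemma projMat_transpose : (projMat X)ᵀ = projMat X := by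
  rw [projMat, transpose_mul, transpose_mul, transpose_transpose, transpose_nonsing_inv,
    transpose_mul, transpose_transpose, Matrix.mul_assoc]

lemma dotProduct_covMat_mulVec (e : Fin n → ℝ) :
    e ⬝ᵥ covMat X *ᵥ e = (∑ i, e i) ^ 2 / n + e ⬝ᵥ projMat X *ᵥ e := by
  have hones : (of fun _ _ => (1 : ℝ) : Matrix (Fin n) (Fin n) ℝ) *ᵥ e = fun _ => ∑ i, e i := by
    ext; simp [mulVec, dotProduct]
  rw [covMat, add_mulVec, smul_mulVec, hones, dotProduct_add, dotProduct_smul]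
  simp [dotProduct, ← Finset.sum_mul]
  ring

variable (hX : IsUnit (Xᵀ * X).det)
include hX

lemma projMat_mul : projMat X * X = X := by
  rw [projMat, Matrix.mul_assoc, Matrix.mul_assoc, nonsing_inv_mul _ hX, Matrix.mul_one]

lemma projMat_mul_self : projMat X * projMat X = projMat X := by
  nth_rw 2 [projMat]
  rw [← Matrix.mul_assoc, ← Matrix.mul_assoc, projMat_mul hX, projMat]

lemma projMat_mulVec_dotProduct_self (e : Fin n → ℝ) :
    projMat X *ᵥ e ⬝ᵥ projMat X *ᵥ e = e ⬝ᵥ projMat X *ᵥ e := by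
  rw [dotProduct_mulVec, ← mulVec_transpose, projMat_transpose, mulVec_mulVec,
    projMat_mul_self hX, dotProduct_comm]

lemma residual_eq_sub_projMat_mulVec (β : Fin p → ℝ) (e : Fin n → ℝ) :
    X *ᵥ β + e - X *ᵥ (olsM X *ᵥ (X *ᵥ β + e)) = e - projMat X *ᵥ e := by
  rw [mulVec_mulVec, olsM, ← Matrix.mul_assoc, ← projMat, mulVec_add, mulVec_mulVec,
    projMat_mul hX]
  abel

lemma trace_covMat (hn : n ≠ 0) : (covMat X).trace = 1 + p := by
  rw [covMat, trace_add, trace_smul, projMat, trace_mul_comm, ← Matrix.mul_assoc,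
    mul_nonsing_inv _ hX]
  simp [Matrix.trace, hn]

end LeastSquares

lemma dotProduct_self_sub_center_sub_le {n : ℕ} (e u : Fin n → ℝ) :
    (e - center (e - u)) ⬝ᵥ (e - center (e - u)) ≤ (∑ i, e i) ^ 2 / n + u ⬝ᵥ u := by
  set s := ∑ i, e i
  set t := ∑ i, u i
  set m := (s - t) / n
  have hcoord : e - center (e - u) = u + fun _ => m := by
    ext i
    simp only [center, Pi.sub_apply, Pi.add_apply, Finset.sum_sub_distrib, s, t, m]
    ring
  have hexpand : (u + fun _ => m) ⬝ᵥ (u + fun _ => m) = u ⬝ᵥ u + 2 * m * t + n * m ^ 2 := by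
    simp only [dotProduct, Pi.add_apply, add_mul, mul_add, Finset.sum_add_distrib,
      ← Finset.sum_mul, ← Finset.mul_sum, Finset.sum_const, Finset.card_univ, Fintype.card_fin,
      nsmul_eq_mul, t]
    ring
  rw [hcoord, hexpand]
  rcases eq_or_ne n 0 with rfl | hn
  · simp [t, m]
  · have hshift : 2 * m * t + n * m ^ 2 = (s ^ 2 - t ^ 2) / n := by
      simp only [m]
      field_simp
      ring
    have : (s ^ 2 - t ^ 2) / n ≤ s ^ 2 / n := by
      gcongr
      nlinarith [sq_nonneg t]
    linarith

lemma euclNorm_sub_center_residual_le {n p : ℕ} {X : Matrix (Fin n) (Fin p) ℝ}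
    (hX : IsUnit (Xᵀ * X).det) (hC : (covMat X).PosSemidef) (β : Fin p → ℝ) (e : Fin n → ℝ) :
    euclNorm (e - center (X *ᵥ β + e - X *ᵥ (olsM X *ᵥ (X *ᵥ β + e))))
      ≤ euclNorm (hC.sqrt *ᵥ e) := by
  rw [residual_eq_sub_projMat_mulVec hX, euclNorm_eq_sqrt_dotProduct, euclNorm_eq_sqrt_dotProduct,
    hC.sqrt_mulVec_dotProduct_self, dotProduct_covMat_mulVec,
    ← projMat_mulVec_dotProduct_self hX]
  exact Real.sqrt_le_sqrt (dotProduct_self_sub_center_sub_le _ _)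

lemma integral_le_sqrt_integral_sq {Ω : Type*} [MeasurableSpace Ω] {μ : Measure Ω}
    [IsProbabilityMeasure μ] {f : Ω → ℝ} (hf : MemLp f 2 μ) :
    ∫ ω, f ω ∂μ ≤ √(∫ ω, f ω ^ 2 ∂μ) := by
  have hvar := ProbabilityTheory.variance_nonneg f μ
  rw [ProbabilityTheory.variance_eq_sub hf] at hvar
  exact Real.le_sqrt_of_sq_le (sub_nonneg.mp hvar)

section Moments

variable {F : Measure ℝ} [IsProbabilityMeasure F] {n : ℕ}

local notation "π" => Measure.pi fun _ : Fin n => F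

lemma integrable_eval_mul_eval_pi (hF : MemLp id 2 F) (j k : Fin n) :
    Integrable (fun v : Fin n → ℝ => v j * v k) π :=
  (hF.comp_measurePreserving (measurePreserving_eval _ j)).integrable_mul
    (hF.comp_measurePreserving (measurePreserving_eval _ k))

lemma integral_eval_mul_eval_pi {σ : ℝ} (hmean : ∫ x, x ∂F = 0) (hvar : ∫ x, x ^ 2 ∂F = σ ^ 2)
    (j k : Fin n) : ∫ v, v j * v k ∂π = if j = k then σ ^ 2 else 0 := by
  split_ifs with hjk
  · subst hjk
    simp_rw [← sq]
    rw [integral_comp_eval (μ := fun _ => F) (f := fun x : ℝ => x ^ 2) (by fun_prop), hvar]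
  · rw [(ProbabilityTheory.iIndepFun_pi (X := fun _ => id) fun _ => aemeasurable_id).indepFun hjk
      |>.integral_fun_mul_eq_mul_integral (measurable_pi_apply j).aestronglyMeasurable
        (measurable_pi_apply k).aestronglyMeasurable]
    simp [integral_eval, hmean]

lemma integrable_dotProduct_mulVec_pi (hF : MemLp id 2 F) (C : Matrix (Fin n) (Fin n) ℝ) :
    Integrable (fun v => v ⬝ᵥ C *ᵥ v) π := by
  simp only [dotProduct, mulVec, Finset.mul_sum]
  exact integrable_finsetSum _ fun j _ => integrable_finsetSum _ fun k _ =>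
    (integrable_eval_mul_eval_pi hF j k).const_mul (C j k) |>.congr
      (ae_of_all _ fun v => by ring)

lemma integral_dotProduct_mulVec_pi {σ : ℝ} (hF : MemLp id 2 F) (hmean : ∫ x, x ∂F = 0)
    (hvar : ∫ x, x ^ 2 ∂F = σ ^ 2) (C : Matrix (Fin n) (Fin n) ℝ) :
    ∫ v, v ⬝ᵥ C *ᵥ v ∂π = σ ^ 2 * C.trace := by
  have hterm : ∀ v : Fin n → ℝ, v ⬝ᵥ C *ᵥ v = ∑ j, ∑ k, C j k * (v j * v k) := fun v => by
    simp only [dotProduct, mulVec, Finset.mul_sum]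
    exact Finset.sum_congr rfl fun j _ => Finset.sum_congr rfl fun k _ => by ring
  simp_rw [hterm]
  refine (integral_finsetSum _ fun j _ => integrable_finsetSum _ fun k _ =>
    (integrable_eval_mul_eval_pi hF j k).const_mul _).trans ?_
  simp_rw [integral_finsetSum _ fun k _ => (integrable_eval_mul_eval_pi hF _ k).const_mul _,
    integral_const_mul, integral_eval_mul_eval_pi hmean hvar]
  simp [Matrix.trace, Finset.mul_sum, mul_comm]

variable {A : Matrix (Fin n) (Fin n) ℝ} (hA : A.PosSemidef)

lemma memLp_euclNorm_sqrt_mulVec_pi (hF : MemLp id 2 F) :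
    MemLp (fun v => euclNorm (hA.sqrt *ᵥ v)) 2 π :=
  (memLp_two_iff_integrable_sq (continuous_euclNorm.comp (by fun_prop)).aestronglyMeasurable).mpr <|
    (integrable_dotProduct_mulVec_pi hF A).congr
      (ae_of_all _ fun v => (hA.euclNorm_sqrt_mulVec_sq v).symm)

lemma integral_euclNorm_sqrt_mulVec_pi_le {σ : ℝ} (hF : MemLp id 2 F) (hmean : ∫ x, x ∂F = 0)
    (hvar : ∫ x, x ^ 2 ∂F = σ ^ 2) :
    ∫ v, euclNorm (hA.sqrt *ᵥ v) ∂π ≤ √(σ ^ 2 * A.trace) := by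
  refine (integral_le_sqrt_integral_sq (memLp_euclNorm_sqrt_mulVec_pi hA hF)).trans_eq ?_
  simp_rw [hA.euclNorm_sqrt_mulVec_sq, integral_dotProduct_mulVec_pi hF hmean hvar]

end Moments

theorem stmt11_general (n p : ℕ) (X : Matrix (Fin n) (Fin p) ℝ) (hX : X.rank = p)
    (hPSD : (covMat X).PosSemidef)
    (Ω : Type*) [MeasurableSpace Ω] (P : Measure Ω)
    (F : Measure ℝ) [IsProbabilityMeasure F] (σ : ℝ) (hσ : 0 ≤ σ)
    (hint2 : Integrable (fun x : ℝ => x ^ 2) F)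
    (hmean : ∫ x, x ∂F = 0) (hvar : ∫ x, x ^ 2 ∂F = σ ^ 2)
    (β : Fin p → ℝ) (ε : Ω → Fin n → ℝ)
    (hε : Measure.map ε P = Measure.pi fun _ : Fin n => F) :
    let y : Ω → Fin n → ℝ := fun ω => X.mulVec β + ε ω
    let bhat : Ω → Fin p → ℝ := fun ω => (olsM X).mulVec (y ω)
    let rhat : Ω → Fin n → ℝ := fun ω => y ω - X.mulVec (bhat ω)
    (∫ ω, wassR 2 (empMeasure (ε ω)) (empMeasure (center (rhat ω))) ∂P
        ≤ ∫ ω, (Real.sqrt n)⁻¹ * euclNorm (hPSD.sqrt.mulVec (ε ω)) ∂P) ∧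
      (∫ ω, (Real.sqrt n)⁻¹ * euclNorm (hPSD.sqrt.mulVec (ε ω)) ∂P
        ≤ σ * Real.sqrt ((p + 1) / n)) := by
  intro y bhat rhat
  have hXtX := isUnit_det_transpose_mul_self hX
  have hF : MemLp id 2 F := (memLp_two_iff_integrable_sq aestronglyMeasurable_id).mpr hint2
  have hεm : AEMeasurable ε P := .of_map_ne_zero (hε ▸ IsProbabilityMeasure.ne_zero _)
  have hG := memLp_euclNorm_sqrt_mulVec_pi hPSD hF
  have hGint := hG.integrable one_le_two
  rw [← hε] at hG hGint
  have hGε : Integrable (fun ω => euclNorm (hPSD.sqrt *ᵥ ε ω)) P := hGint.comp_aemeasurable hεm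
  constructor
  · refine integral_mono_of_nonneg (ae_of_all _ fun _ => wassR_nonneg _ _ _) (hGε.const_mul _)
      (ae_of_all _ fun ω => ?_)
    exact (wassR_two_empMeasure_le _ _).trans <| mul_le_mul_of_nonneg_left
      (euclNorm_sub_center_residual_le hXtX hPSD β (ε ω)) (by positivity)
  · rw [integral_const_mul, ← integral_map (f := fun v => euclNorm (hPSD.sqrt *ᵥ v)) hεm hG.1, hε]
    rcases eq_or_ne n 0 with rfl | hn
    · simp only [CharP.cast_eq_zero, Real.sqrt_zero, _root_.inv_zero, zero_mul]
      positivity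
    calc (√n)⁻¹ * ∫ v, euclNorm (hPSD.sqrt *ᵥ v) ∂(Measure.pi fun _ : Fin n => F)
        ≤ (√n)⁻¹ * √(σ ^ 2 * (covMat X).trace) := by
          gcongr; exact integral_euclNorm_sqrt_mulVec_pi_le hPSD hF hmean hvar
      _ = σ * √((p + 1) / n) := by
          rw [trace_covMat hXtX hn, Real.sqrt_mul (sq_nonneg σ), Real.sqrt_sq hσ,
            Real.sqrt_div' _ (Nat.cast_nonneg n), add_comm (1 : ℝ)]
          ring

/-- Lemma 5 of the paper:
`E[d₂(F_n, F̂_n)] ≤ E[(1/√n)‖((1/n)𝟙𝟙ᵀ + Π)^{1/2}ε_n‖₂] ≤ σ√((p+1)/n)`. -/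
theorem stmt11 (n p : ℕ) (X : Matrix (Fin n) (Fin p) ℝ) (hX : X.rank = p)
    (hPSD : (covMat X).PosSemidef)
    (Ω : Type*) [MeasurableSpace Ω] (P : Measure Ω) [IsProbabilityMeasure P]
    (F : Measure ℝ) [IsProbabilityMeasure F] (σ : ℝ) (hσ : 0 ≤ σ)
    (hint1 : Integrable (fun x : ℝ => x) F) (hint2 : Integrable (fun x : ℝ => x ^ 2) F)
    (hmean : ∫ x, x ∂F = 0) (hvar : ∫ x, x ^ 2 ∂F = σ ^ 2)
    (β : Fin p → ℝ) (ε : Ω → Fin n → ℝ)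
    (hε : Measure.map ε P = Measure.pi fun _ : Fin n => F) :
    let y : Ω → Fin n → ℝ := fun ω => X.mulVec β + ε ω
    let bhat : Ω → Fin p → ℝ := fun ω => (olsM X).mulVec (y ω)
    let rhat : Ω → Fin n → ℝ := fun ω => y ω - X.mulVec (bhat ω)
    (∫ ω, wassR 2 (empMeasure (ε ω)) (empMeasure (center (rhat ω))) ∂P
        ≤ ∫ ω, (Real.sqrt n)⁻¹ * euclNorm (hPSD.sqrt.mulVec (ε ω)) ∂P) ∧
      (∫ ω, (Real.sqrt n)⁻¹ * euclNorm (hPSD.sqrt.mulVec (ε ω)) ∂P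
        ≤ σ * Real.sqrt ((p + 1) / n)) :=
  stmt11_general n p X hX hPSD Ω P F σ hσ hint2 hmean hvar β ε hε
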